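/- arXiv:1506.05098 — 2 statements merged into one kernel-verified Lean document; each statement's English description precedes it below -/
import Mathlib

section
/- Let m, g ∈ ℂ^N, S ∈ ℂ^{N×N} and d ∈ ℂ^N satisfy, componentwise, (Id − diag(m)² S)(g − m)_i = m_i (g_i − m_i)(S(g − m))_i + m_i² d_i + m_i (g_i − m_i) d_i for all i. Suppose ‖S‖_{∞→∞} ≤ 1, ‖m‖_∞ ≤ 2/|z| ≤ 1/5 for some |z| ≥ 10, and ‖g − m‖_∞ ≤ 4/|z|. Then ‖g − m‖_∞ ≤ C |z|^{-2} ‖d‖_∞ for an absolute constant C (e.g. C = 40). -/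
open Matrix

/-- Stability of the QVE away from the support: if `g - m` satisfies the
quadratic identity `(Id − diag(m)² S)(g−m)_i = m_i(g_i−m_i)(S(g−m))_i
+ m_i² d_i + m_i(g_i−m_i) d_i`, with `‖S‖_{∞→∞} ≤ 1`, `‖m‖_∞ ≤ 2/|z| ≤ 1/5`
for some `|z| ≥ 10`, and the a priori bound `‖g−m‖_∞ ≤ 4/|z|`, then
`‖g−m‖_∞ ≤ 40 |z|⁻² ‖d‖_∞`. -/
theorem qve_stability_away_from_support
    (N : ℕ) (S : Matrix (Fin N) (Fin N) ℂ) (m g d : Fin N → ℂ) (z : ℂ)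
    (hz : 10 ≤ ‖z‖)
    (hS : ∀ v : Fin N → ℂ, ‖S.mulVec v‖ ≤ ‖v‖)
    (hm : ∀ i, ‖m i‖ ≤ 2 / ‖z‖)
    (hgm : ∀ i, ‖g i - m i‖ ≤ 4 / ‖z‖)
    (hid : ∀ i,
      Matrix.mulVec
          ((1 : Matrix (Fin N) (Fin N) ℂ) -
            Matrix.of fun i j => m i ^ 2 * S i j) (g - m) i =
        m i * (g i - m i) * (S.mulVec (g - m)) i + m i ^ 2 * d i +
          m i * (g i - m i) * d i) :
    ∀ i, ‖g i - m i‖ ≤ 40 / (‖z‖) ^ 2 * ⨆ j, ‖d j‖ := by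
  intro i₀
  have : Nonempty (Fin N) := ⟨i₀⟩
  set A := ‖z‖ with hA
  have hApos : (0:ℝ) < A := by linarith
  set D : ℝ := ⨆ j, ‖d j‖ with hD
  have hDle : ∀ j, ‖d j‖ ≤ D := fun j =>
    le_ciSup (f := fun j => ‖d j‖) (Set.Finite.bddAbove (Set.finite_range _)) j
  have hDpos : 0 ≤ D := le_trans (norm_nonneg _) (hDle i₀)
  set Λ : ℝ := ‖g - m‖ with hΛ
  have hΛpos : 0 ≤ Λ := norm_nonneg _
  have hiB : ‖g i₀ - m i₀‖ ≤ Λ := by simpa using norm_le_pi_norm (g - m) i₀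
  -- rewrite the identity
  have hkey : ∀ i, g i - m i =
      m i ^ 2 * (S.mulVec (g - m)) i + m i * (g i - m i) * (S.mulVec (g - m)) i
        + m i ^ 2 * d i + m i * (g i - m i) * d i := by
    intro i
    have h := hid i
    have hof : Matrix.mulVec (Matrix.of fun i j => m i ^ 2 * S i j) (g - m) i
        = m i ^ 2 * (S.mulVec (g - m)) i := by
      simp [Matrix.mulVec, dotProduct, Finset.mul_sum, mul_assoc]
    rw [Matrix.sub_mulVec, Matrix.one_mulVec] at h
    simp only [Pi.sub_apply, hof] at h
    linear_combination h
  -- pointwise bound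
  have hbound : ∀ i, ‖g i - m i‖ ≤ 12 / A ^ 2 * Λ + 12 / A ^ 2 * D := by
    intro i
    have h1 : ‖(S.mulVec (g - m)) i‖ ≤ Λ :=
      le_trans (norm_le_pi_norm _ i) (hS _)
    have h1' : (0:ℝ) ≤ ‖(S.mulVec (g - m)) i‖ := norm_nonneg _
    have h2 : ‖g i - m i‖ ≤ 4 / A := hgm i
    have h3 : ‖m i‖ ≤ 2 / A := hm i
    have h3' : (0:ℝ) ≤ ‖m i‖ := norm_nonneg _
    have h2' : (0:ℝ) ≤ ‖g i - m i‖ := norm_nonneg _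
    have h4 : ‖d i‖ ≤ D := hDle i
    have h4' : (0:ℝ) ≤ ‖d i‖ := norm_nonneg _
    rw [hkey i]
    have t1 : ‖m i ^ 2 * (S.mulVec (g - m)) i‖ ≤ 4 / A ^ 2 * Λ := by
      rw [norm_mul, norm_pow]
      calc ‖m i‖ ^ 2 * ‖(S.mulVec (g - m)) i‖ ≤ (2 / A) ^ 2 * Λ := by gcongr
        _ = 4 / A ^ 2 * Λ := by ring
    have t2 : ‖m i * (g i - m i) * (S.mulVec (g - m)) i‖ ≤ 8 / A ^ 2 * Λ := by
      rw [norm_mul, norm_mul]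
      calc ‖m i‖ * ‖g i - m i‖ * ‖(S.mulVec (g - m)) i‖ ≤ 2 / A * (4 / A) * Λ := by gcongr
        _ = 8 / A ^ 2 * Λ := by ring
    have t3 : ‖m i ^ 2 * d i‖ ≤ 4 / A ^ 2 * D := by
      rw [norm_mul, norm_pow]
      calc ‖m i‖ ^ 2 * ‖d i‖ ≤ (2 / A) ^ 2 * D := by gcongr
        _ = 4 / A ^ 2 * D := by ring
    have t4 : ‖m i * (g i - m i) * d i‖ ≤ 8 / A ^ 2 * D := by
      rw [norm_mul, norm_mul]
      calc ‖m i‖ * ‖g i - m i‖ * ‖d i‖ ≤ 2 / A * (4 / A) * D := by gcongr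
        _ = 8 / A ^ 2 * D := by ring
    calc ‖m i ^ 2 * (S.mulVec (g - m)) i + m i * (g i - m i) * (S.mulVec (g - m)) i
            + m i ^ 2 * d i + m i * (g i - m i) * d i‖
        ≤ ‖m i ^ 2 * (S.mulVec (g - m)) i‖ + ‖m i * (g i - m i) * (S.mulVec (g - m)) i‖
            + ‖m i ^ 2 * d i‖ + ‖m i * (g i - m i) * d i‖ := by
          exact le_trans (norm_add_le _ _) (by
            have := le_trans (norm_add_le (m i ^ 2 * (S.mulVec (g - m)) i +
              m i * (g i - m i) * (S.mulVec (g - m)) i) (m i ^ 2 * d i))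
              (add_le_add_left (norm_add_le _ _) _)
            linarith)
      _ ≤ 4 / A ^ 2 * Λ + 8 / A ^ 2 * Λ + 4 / A ^ 2 * D + 8 / A ^ 2 * D :=
          add_le_add (add_le_add (add_le_add t1 t2) t3) t4
      _ = 12 / A ^ 2 * Λ + 12 / A ^ 2 * D := by ring
  -- sup bound
  have hΛle : Λ ≤ 12 / A ^ 2 * Λ + 12 / A ^ 2 * D := by
    rw [hΛ]
    apply pi_norm_le_iff_of_nonneg (by positivity) |>.2
    intro i
    simpa using hbound i
  have hfin : Λ ≤ 40 / A ^ 2 * D := by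
    have hA2 : (100:ℝ) ≤ A ^ 2 := by nlinarith
    have hA2pos : (0:ℝ) < A ^ 2 := by positivity
    have h : Λ * A ^ 2 ≤ 12 * Λ + 12 * D := by
      have h' := mul_le_mul_of_nonneg_right hΛle hA2pos.le
      have e : (12 / A ^ 2 * Λ + 12 / A ^ 2 * D) * A ^ 2 = 12 * Λ + 12 * D := by
        field_simp
      linarith [e ▸ h']
    rw [div_mul_eq_mul_div, le_div_iff₀ hA2pos]
    nlinarith [mul_le_mul_of_nonneg_left hA2 hΛpos]
  exact le_trans hiB hfin
end

section
/- Let ρ : ℝ → [0, ∞) be an integrable probability density, let λ : {1,…,N} → ℝ be nondecreasing (eigenvalues), and for τ ∈ ℝ define δ₊(τ) = inf{δ ≥ 0 : 2 + |#{i : λ_i ≤ τ+δ} − N∫_{−∞}^{τ+δ} ρ| ≤ N ∫_τ^{τ+δ} ρ} and δ₋(τ) = inf{δ ≥ 0 : 1 + |#{i : λ_i ≤ τ−δ} − N∫_{−∞}^{τ−δ} ρ| ≤ N ∫_{τ−δ}^τ ρ}, and let i(τ) = ⌈N ∫_{−∞}^τ ρ⌉ with 1 ≤ i(τ) ≤ N.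 Then λ_{i(τ)} ∈ [τ − δ₋(τ), τ + δ₊(τ)]. -/
open MeasureTheory

/-- Deterministic rigidity: a nondecreasing sequence `λ_1 ≤ … ≤ λ_N` and a
probability density `ρ` being given, with `F(τ) = ∫_{−∞}^τ ρ`, the eigenvalue
with classical index `i(τ) = ⌈N F(τ)⌉` lies in `[τ − δ₋(τ), τ + δ₊(τ)]`,
where `δ₊(τ) = inf {δ ≥ 0 : 2 + |#{i : λ_i ≤ τ+δ} − N F(τ+δ)| ≤ N(F(τ+δ)−F(τ))}`
and `δ₋(τ) = inf {δ ≥ 0 : 1 + |#{i : λ_i ≤ τ−δ} − N F(τ−δ)| ≤ N(F(τ)−F(τ−δ))}`,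
assuming these sets are nonempty (finite infima) and `1 ≤ i(τ) ≤ N`. -/
theorem eigenvalue_rigidity_deterministic
    (N : ℕ) (lam : Fin N → ℝ) (hlam : Monotone lam)
    (ρ : ℝ → ℝ) (hρ0 : ∀ x, 0 ≤ ρ x) (hρint : Integrable ρ)
    (hρ1 : ∫ x, ρ x = 1) (τ : ℝ)
    (F : ℝ → ℝ) (hF : ∀ t, F t = ∫ ω in Set.Iic t, ρ ω)
    (cnt : ℝ → ℝ)
    (hcnt : ∀ t, cnt t = ((Finset.univ.filter fun i => lam i ≤ t).card : ℝ))
    (Splus Sminus : Set ℝ)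
    (hSplus : Splus = {d : ℝ | 0 ≤ d ∧
      2 + |cnt (τ + d) - N * F (τ + d)| ≤ N * (F (τ + d) - F τ)})
    (hSminus : Sminus = {d : ℝ | 0 ≤ d ∧
      1 + |cnt (τ - d) - N * F (τ - d)| ≤ N * (F τ - F (τ - d))})
    (hSplusNE : Splus.Nonempty) (hSminusNE : Sminus.Nonempty)
    (itau : ℕ) (hitau : itau = ⌈(N : ℝ) * F τ⌉₊)
    (h1 : 1 ≤ itau) (h2 : itau ≤ N) :
    τ - sInf Sminus ≤ lam ⟨itau - 1, by omega⟩ ∧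
      lam ⟨itau - 1, by omega⟩ ≤ τ + sInf Splus := by
  have hF0 : 0 ≤ F τ := by
    rw [hF]; exact setIntegral_nonneg measurableSet_Iic fun x _ => hρ0 x
  have hNF0 : 0 ≤ (N : ℝ) * F τ := by positivity
  have hle : (N : ℝ) * F τ ≤ itau := by rw [hitau]; exact Nat.le_ceil _
  have hlt : (itau : ℝ) < (N : ℝ) * F τ + 1 := by
    rw [hitau]; exact Nat.ceil_lt_add_one hNF0
  have key := fun (t : ℝ) => (hcnt t)
  constructor
  · -- lower bound
    rw [sub_le_iff_le_add, ← sub_le_iff_le_add']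
    apply le_csInf hSminusNE
    intro d hd
    rw [hSminus] at hd
    obtain ⟨hd0, habs⟩ := hd
    rw [sub_le_comm]
    by_contra hcon
    push_neg at hcon
    have hsub : Finset.Iic (⟨itau - 1, by omega⟩ : Fin N) ⊆
        Finset.univ.filter fun i => lam i ≤ τ - d := by
      intro j hj
      simp only [Finset.mem_Iic] at hj
      simp only [Finset.mem_filter, Finset.mem_univ, true_and]
      exact le_of_lt (lt_of_le_of_lt (hlam hj) hcon)
    have hcard : itau ≤ (Finset.univ.filter fun i => lam i ≤ τ - d).card := by
      have := Finset.card_le_card hsub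
      rwa [Fin.card_Iic, Nat.sub_add_cancel h1] at this
    have hcard' : (itau : ℝ) ≤ cnt (τ - d) := by
      rw [hcnt]; exact_mod_cast hcard
    have h3 : cnt (τ - d) - N * F (τ - d) ≤ |cnt (τ - d) - N * F (τ - d)| :=
      le_abs_self _
    linarith
  · -- upper bound
    rw [← sub_le_iff_le_add']
    apply le_csInf hSplusNE
    intro d hd
    rw [hSplus] at hd
    obtain ⟨hd0, habs⟩ := hd
    rw [sub_le_iff_le_add']
    by_contra hcon
    push_neg at hcon
    have hsub : (Finset.univ.filter fun i => lam i ≤ τ + d) ⊆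
        Finset.Iio (⟨itau - 1, by omega⟩ : Fin N) := by
      intro j hj
      simp only [Finset.mem_filter, Finset.mem_univ, true_and] at hj
      simp only [Finset.mem_Iio]
      by_contra hge
      push_neg at hge
      exact absurd (le_trans (hlam hge) hj) (not_le.mpr hcon)
    have hcard : (Finset.univ.filter fun i => lam i ≤ τ + d).card ≤ itau - 1 := by
      have := Finset.card_le_card hsub
      rwa [Fin.card_Iio] at this
    have hcard' : cnt (τ + d) ≤ (itau : ℝ) - 1 := by
      rw [hcnt]
      have : ((itau - 1 : ℕ) : ℝ) = (itau : ℝ) - 1 := by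
        have := Nat.cast_sub h1 (R := ℝ); simpa using this
      rw [← this]; exact_mod_cast hcard
    have h3 : -(cnt (τ + d) - N * F (τ + d)) ≤ |cnt (τ + d) - N * F (τ + d)| :=
      neg_le_abs _
    linarith
end
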